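/- arXiv:math/0606004 — 3 statements merged into one kernel-verified Lean document; each statement's English description precedes it below -/
import Mathlib

section
/- Let 𝒫 be a weak parallelogram structure on a nonempty set X, with base B = X²/∼ and ⟨x,y⟩ the ∼-class of (x,y). Then there is a unique multiplication on B satisfying ⟨a,b⟩·⟨b,c⟩ = ⟨a,c⟩ for all a,b,c ∈ X, and with this multiplication B is an abelian group, whose identity element is the common class of the pairs (a,a) for a ∈ X and in which the inverse of ⟨a,b⟩ is ⟨b,a⟩. -/
open scoped Pointwise

namespace HK

/-- Quadruples of elements of `X`, indexed by the vertices `00, 01, 10, 11` of the square. -/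
abbrev Quad (X : Type) := X × X × X × X

/-- Vertices of the cube `{0,1}³`. -/
abbrev Vtx := Fin 3 → Bool

/-- Elements of `X^{[3]} = X⁸`, indexed by the vertices of the cube. -/
abbrev Cube (X : Type) := Vtx → X

variable {X Y : Type}

/-- Apply a map coordinatewise to a quadruple. -/
def map4 (f : X → Y) (p : Quad X) : Quad Y := (f p.1, f p.2.1, f p.2.2.1, f p.2.2.2)

/-- Apply a map coordinatewise to a cube. -/
def mapCube (f : X → Y) (x : Cube X) : Cube Y := fun v => f (x v)

/-- A weak parallelogram structure: the relation `(x00,x01) ∼ (x10,x11) ↔ (x00,x01,x10,x11) ∈ P`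
is an equivalence relation, `P` is invariant under exchanging the two middle entries, and
any three points can be completed to a parallelogram. -/
def IsWeakParallelogram (P : Set (Quad X)) : Prop :=
  (∀ a b : X, (a, b, a, b) ∈ P) ∧
  (∀ a b c d : X, (a, b, c, d) ∈ P → (c, d, a, b) ∈ P) ∧
  (∀ a b c d e f : X, (a, b, c, d) ∈ P → (c, d, e, f) ∈ P → (a, b, e, f) ∈ P) ∧
  (∀ a b c d : X, (a, b, c, d) ∈ P → (a, c, b, d) ∈ P) ∧
  (∀ a b c : X, ∃ d, (a, b, c, d) ∈ P)

/-- A strong parallelogram structure: the completing fourth point is unique. -/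
def IsStrongParallelogram (P : Set (Quad X)) : Prop :=
  IsWeakParallelogram P ∧ ∀ a b c : X, ∃! d, (a, b, c, d) ∈ P

/-- The entry of a quadruple at a vertex of the square. -/
def quadAt (p : Quad X) : Bool → Bool → X
  | false, false => p.1
  | false, true => p.2.1
  | true, false => p.2.2.1
  | true, true => p.2.2.2

/-- The cube whose face `ε₁ = 0` is `p` and whose face `ε₁ = 1` is `q`. -/
def joinQuad (p q : Quad X) : Cube X :=
  fun v => if v 0 = false then quadAt p (v 1) (v 2) else quadAt q (v 1) (v 2)

/-- The vertex of the cube with value `b` at coordinate `i` and values `u,v` at the two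
remaining coordinates, taken in increasing order. -/
def insert3 (i : Fin 3) (b u v : Bool) : Vtx :=
  if i = 0 then ![b, u, v] else if i = 1 then ![u, b, v] else ![u, v, b]

/-- The face `{v : v i = b}` of a cube, as a quadruple in lexicographic order. -/
def face (x : Cube X) (i : Fin 3) (b : Bool) : Quad X :=
  (x (insert3 i b false false), x (insert3 i b false true),
   x (insert3 i b true false), x (insert3 i b true true))

/-- The permutations of the vertices of the cube induced by Euclidean isometries of the unit
cube: a permutation of the three coordinates composed with flips of some coordinates. -/
def cubeSym (σ : Equiv.Perm (Fin 3)) (c : Vtx) (v : Vtx) : Vtx :=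
  fun j => xor (v (σ j)) (c j)

/-- A weak parallelepiped structure `(P, Q)`: every face of an element of `Q` lies in `P`;
`Q` is invariant under the Euclidean permutations of the cube; the relation `≈` on `P`
(`p ≈ q ↔ joinQuad p q ∈ Q`) is an equivalence relation; and seven points whose three
determined faces lie in `P` can be completed to an element of `Q`. -/
def IsWeakParallelepiped (P : Set (Quad X)) (Q : Set (Cube X)) : Prop :=
  IsWeakParallelogram P ∧
  (∀ x ∈ Q, ∀ (i : Fin 3) (b : Bool), face x i b ∈ P) ∧
  (∀ (σ : Equiv.Perm (Fin 3)) (c : Vtx), ∀ x ∈ Q, (fun v => x (cubeSym σ c v)) ∈ Q) ∧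
  (∀ p ∈ P, joinQuad p p ∈ Q) ∧
  (∀ p q : Quad X, joinQuad p q ∈ Q → joinQuad q p ∈ Q) ∧
  (∀ p q r : Quad X, joinQuad p q ∈ Q → joinQuad q r ∈ Q → joinQuad p r ∈ Q) ∧
  (∀ x000 x001 x010 x011 x100 x101 x110 : X,
    (x000, x001, x010, x011) ∈ P → (x000, x010, x100, x110) ∈ P →
    (x000, x001, x100, x101) ∈ P →
    ∃ x111, joinQuad (x000, x001, x010, x011) (x100, x101, x110, x111) ∈ Q)

/-- A strong parallelepiped structure: the completing eighth point is unique. -/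
def IsStrongParallelepiped (P : Set (Quad X)) (Q : Set (Cube X)) : Prop :=
  IsWeakParallelepiped P Q ∧
  ∀ x000 x001 x010 x011 x100 x101 x110 : X,
    (x000, x001, x010, x011) ∈ P → (x000, x010, x100, x110) ∈ P →
    (x000, x001, x100, x101) ∈ P →
    ∃! x111, joinQuad (x000, x001, x010, x011) (x100, x101, x110, x111) ∈ Q

/-- The setoid on `X²` given by the parallelogram relation `∼`. -/
def baseSetoid (P : Set (Quad X)) (hP : IsWeakParallelogram P) : Setoid (X × X) where
  r p q := (p.1, p.2, q.1, q.2) ∈ P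
  iseqv := ⟨fun p => hP.1 p.1 p.2,
            fun h => hP.2.1 _ _ _ _ h,
            fun h h' => hP.2.2.1 _ _ _ _ _ _ h h'⟩

/-- The base `B = X²/∼` of a weak parallelogram structure. -/
def Base (P : Set (Quad X)) (hP : IsWeakParallelogram P) : Type := Quotient (baseSetoid P hP)

/-- The class `⟨x,y⟩ ∈ B` of a pair `(x,y)`. -/
def cls (P : Set (Quad X)) (hP : IsWeakParallelogram P) (x y : X) : Base P hP :=
  Quotient.mk (baseSetoid P hP) (x, y)

/-- The Gowers-type sum over parallelograms attached to a finitely supported `f : X → ℂ`. -/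
noncomputable def gSum2 (P : Set (Quad X)) (f : X →₀ ℂ) : ℂ :=
  ∑ᶠ q ∈ P, f q.1 * (starRingEnd ℂ) (f q.2.1) * (starRingEnd ℂ) (f q.2.2.1) * f q.2.2.2

/-- The seminorm `‖f‖_P = (gSum2 P f)^{1/4}`. -/
noncomputable def pNorm (P : Set (Quad X)) (f : X →₀ ℂ) : ℝ :=
  (gSum2 P f).re ^ ((1 : ℝ) / 4)

/-- `C^{|ε|} z`: conjugate `z` when the vertex `v` has an odd number of `1` entries. -/
noncomputable def cConjFactor (v : Vtx) (z : ℂ) : ℂ :=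
  if xor (v 0) (xor (v 1) (v 2)) then (starRingEnd ℂ) z else z

/-- The Gowers-type sum over parallelepipeds attached to a finitely supported `f : X → ℂ`. -/
noncomputable def gSum3 (Q : Set (Cube X)) (f : X →₀ ℂ) : ℂ :=
  ∑ᶠ x ∈ Q, ∏ v : Vtx, cConjFactor v (f (x v))

/-- The seminorm `‖f‖_Q = (gSum3 Q f)^{1/8}`. -/
noncomputable def qNorm (Q : Set (Cube X)) (f : X →₀ ℂ) : ℝ :=
  (gSum3 Q f).re ^ ((1 : ℝ) / 8)

/-- The structure group of a parallelepiped structure, as a set of bijections of `X`: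
those `g` mapping every parallelogram to an equivalent parallelogram. -/
def structSet (P : Set (Quad X)) (Q : Set (Cube X)) : Set (Equiv.Perm X) :=
  {g | ∀ p ∈ P, map4 g p ∈ P ∧ joinQuad (map4 g p) p ∈ Q}

/-- `x` and `y` lie in the same fiber of `π : X → B`, `π(x) = ⟨i,x⟩`. -/
def sameFiber (P : Set (Quad X)) (i x y : X) : Prop := (i, x, i, y) ∈ P

/-- A vertical quadruple: all four points lie in one fiber. -/
def VerticalQ (P : Set (Quad X)) (i : X) (w : Quad X) : Prop :=
  sameFiber P i w.1 w.2.1 ∧ sameFiber P i w.2.1 w.2.2.1 ∧ sameFiber P i w.2.2.1 w.2.2.2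

/-- `y = u·x` where `u = [w]` is the class of the vertical parallelogram `w`:
`(x,x,x,y)` is a parallelogram equivalent to `w`. -/
def actsRel (P : Set (Quad X)) (Q : Set (Cube X)) (w : Quad X) (x y : X) : Prop :=
  (x, x, x, y) ∈ P ∧ joinQuad (x, x, x, y) w ∈ Q

section Groups

variable (G : Type) [Group G]

/-- The diagonal embedding `G → G^{[2]}`. -/
def diagHom2 : G →* Quad G where
  toFun g := (g, g, g, g)
  map_one' := rfl
  map_mul' _ _ := rfl

/-- The diagonal embedding `G → G^{[3]}`. -/
def diagHom3 : G →* Cube G where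
  toFun g := fun _ => g
  map_one' := rfl
  map_mul' _ _ := rfl

/-- The two dimensional edge group `G^{[2,1]}`. -/
def edgeGroup2 : Subgroup (Quad G) :=
  Subgroup.closure
    {q : Quad G | ∃ g : G, q = (g, g, 1, 1) ∨ q = (g, 1, g, 1) ∨ q = (g, g, g, g)}

/-- The second commutator subgroup `G₃ = [G, G₂]`. -/
def secondCommutator : Subgroup G := ⁅(⊤ : Subgroup G), commutator G⁆

variable {G}

/-- The edge group `F^{[2,1]}` of a subgroup `F ≤ G`, inside `G^{[2]}`. -/
def edgeGroup2Of (F : Subgroup G) : Subgroup (Quad G) :=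
  Subgroup.closure
    {q : Quad G | ∃ u ∈ F, q = (u, u, 1, 1) ∨ q = (u, 1, u, 1) ∨ q = (u, u, u, u)}

/-- `F^{[2]} = F⁴` as a subgroup of `G^{[2]}`. -/
def quadSub (F : Subgroup G) : Subgroup (Quad G) := F.prod (F.prod (F.prod F))

/-- Faces of the cube `{0,1}³`. -/
def IsFace3 (α : Set Vtx) : Prop := ∃ (i : Fin 3) (b : Bool), α = {v : Vtx | v i = b}

/-- Edges of the cube `{0,1}³`. -/
def IsEdge3 (α : Set Vtx) : Prop :=
  ∃ (i j : Fin 3) (b c : Bool), i ≠ j ∧ α = {v : Vtx | v i = b ∧ v j = c}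

open Classical in
/-- The element `g^{[3,α]}` of `G^{[3]}`, with coordinate `g` on `α` and `1` elsewhere. -/
noncomputable def cubeElt (α : Set Vtx) (g : G) : Cube G :=
  fun v => if v ∈ α then g else 1

variable (G)

/-- The face group `G^{[3,2]}`, generated by the `g^{[3,f]}` for faces `f` of the cube. -/
noncomputable def faceGroup : Subgroup (Cube G) :=
  Subgroup.closure {x : Cube G | ∃ (g : G) (α : Set Vtx), IsFace3 α ∧ x = cubeElt α g}

variable {G}

/-- The edge group `F^{[3,1]}` of a subgroup `F ≤ G`, generated by the `u^{[3,e]}` for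
`u ∈ F` and edges `e` of the cube. -/
noncomputable def edgeGroup3 (F : Subgroup G) : Subgroup (Cube G) :=
  Subgroup.closure {x : Cube G | ∃ u ∈ F, ∃ α : Set Vtx, IsEdge3 α ∧ x = cubeElt α u}

end Groups

/-- The data realizing `(PY, QY)` as the nilparallelepiped structure associated to
`G`, `F`, `Γ` via the coset projection `p : G → Y ≅ G/Γ`. -/
def NilWitness (G : Type) [Group G] (F Γ : Subgroup G) {Y : Type} (p : G → Y)
    (PY : Set (Quad Y)) (QY : Set (Cube Y)) : Prop :=
  commutator G ≤ F ∧ F ≤ Subgroup.center G ∧ Γ ⊓ F = ⊥ ∧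
  Function.Surjective p ∧ (∀ g g' : G, p g = p g' ↔ g⁻¹ * g' ∈ Γ) ∧
  PY = map4 p '' ((edgeGroup2 G : Set (Quad G)) * (quadSub F : Set (Quad G))) ∧
  QY = mapCube p '' ((faceGroup G : Set (Cube G)) * (edgeGroup3 F : Set (Cube G)))

/-- `(PY, QY)` is a nilparallelepiped structure. -/
def IsNilStructure {Y : Type} (PY : Set (Quad Y)) (QY : Set (Cube Y)) : Prop :=
  ∃ (G : Type) (inst : Group G) (F Γ : @Subgroup G inst) (p : G → Y),
    @NilWitness G inst F Γ Y p PY QY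

/-- A splitting of the exact sequence `0 → F → P_s → B → 0` for `s = ⟨a₀, b₀⟩`, encoded
by a lift `ψ : X → 𝒫_s` of a homomorphism section `φ : B → P_s` of `q_s`:
`ψ x` is a parallelogram in `𝒫_s` representing the class `φ(π(x))`. -/
def IsSplittingAt (P : Set (Quad X)) (Q : Set (Cube X)) (i a₀ b₀ : X) : Prop :=
  ∃ ψ : X → Quad X,
    (∀ x, ψ x ∈ P) ∧
    (∀ x, (a₀, b₀, (ψ x).1, (ψ x).2.1) ∈ P) ∧
    (∀ x, ((ψ x).1, (ψ x).2.2.1, i, x) ∈ P) ∧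
    (∀ x y, (i, x, i, y) ∈ P → joinQuad (ψ x) (ψ y) ∈ Q) ∧
    (∀ x1 x2 x3, (x1, x3, i, x2) ∈ P →
      ∃ c d, joinQuad ((ψ x1).2.2.1, (ψ x1).2.2.2, c, d) (ψ x2) ∈ Q ∧
        joinQuad ((ψ x1).1, (ψ x1).2.1, c, d) (ψ x3) ∈ Q)

/-- `(B, c)` is a realization of the base group of the parallelogram structure `P`,
`c x y` realizing the class `⟨x,y⟩`. -/
def IsBaseRealization (P : Set (Quad X)) (B : Type) [AddCommGroup B] (c : X → X → B) : Prop :=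
  (Function.Surjective fun p : X × X => c p.1 p.2) ∧
  (∀ a b a' b' : X, c a b = c a' b' ↔ (a, b, a', b') ∈ P) ∧
  (∀ a b d : X, c a b + c b d = c a d)

/-- `(F, fl)` is a realization of the fiber group of the parallelepiped structure `(P, Q)`:
`fl` maps vertical parallelograms onto `F`, separates exactly the `≈`-classes, and is
additive with respect to the composition of vertical parallelograms. -/
def IsFiberRealization (P : Set (Quad X)) (Q : Set (Cube X)) (i : X) (F : Type)
    [AddCommGroup F] (fl : Quad X → F) : Prop :=
  (∀ u : F, ∃ w, VerticalQ P i w ∧ fl w = u) ∧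
  (∀ w w' : Quad X, VerticalQ P i w → VerticalQ P i w' →
    (fl w = fl w' ↔ joinQuad w w' ∈ Q)) ∧
  (∀ x0 x1 x2 x3 x4 x5 : X, sameFiber P i x0 x1 → sameFiber P i x1 x2 →
    sameFiber P i x2 x3 → sameFiber P i x3 x4 → sameFiber P i x4 x5 →
    fl (x0, x1, x2, x3) + fl (x2, x3, x4, x5) = fl (x0, x1, x4, x5))

/-- A divisible (equivalently, injective) abelian group. -/
def IsDivisibleGroup (F : Type) [AddCommGroup F] : Prop :=
  ∀ (u : F) (n : ℕ), 0 < n → ∃ v : F, n • v = u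

/-- A projective abelian group (projective as a `ℤ`-module). -/
def IsProjectiveAdd (B : Type) [AddCommGroup B] : Prop := Module.Projective ℤ B

/-! Gluing the parallelograms `(a,b,c,d)` and `(b,e,d,f)` along their common side `(b,d)` gives
the parallelogram `(a,e,c,f)`, so `⟨a,c⟩` depends only on `⟨a,b⟩` and `⟨b,c⟩`. Completing
parallelograms writes any two classes as `⟨a,b⟩, ⟨b,c⟩` with a common middle point, after which
the group laws are instances of `⟨a,b⟩·⟨b,c⟩ = ⟨a,c⟩`. Commutativity is the exchange axiom:
`⟨a,b⟩ = ⟨c,d⟩` if and only if `⟨a,c⟩ = ⟨b,d⟩`. -/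

namespace IsWeakParallelogram

variable {P : Set (Quad X)} (hP : IsWeakParallelogram P) {a b c d e f : X}
include hP

lemma refl (a b : X) : (a, b, a, b) ∈ P := hP.1 a b

lemma symm (h : (a, b, c, d) ∈ P) : (c, d, a, b) ∈ P := hP.2.1 _ _ _ _ h

lemma trans (h : (a, b, c, d) ∈ P) (h' : (c, d, e, f) ∈ P) : (a, b, e, f) ∈ P :=
  hP.2.2.1 _ _ _ _ _ _ h h'

lemma exchange (h : (a, b, c, d) ∈ P) : (a, c, b, d) ∈ P := hP.2.2.2.1 _ _ _ _ h

lemma exists_completion (a b c : X) : ∃ d, (a, b, c, d) ∈ P := hP.2.2.2.2 a b c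

lemma glue (h : (a, b, c, d) ∈ P) (h' : (b, e, d, f) ∈ P) : (a, e, c, f) ∈ P :=
  hP.exchange (hP.trans (hP.exchange h) (hP.exchange h'))

end IsWeakParallelogram

section Base

variable {P : Set (Quad X)} {hP : IsWeakParallelogram P} {a b c a' b' c' : X}

lemma cls_eq_cls_iff {d : X} : cls P hP a b = cls P hP c d ↔ (a, b, c, d) ∈ P :=
  Quotient.eq

lemma cls_self_eq_cls_self (a b : X) : cls P hP a a = cls P hP b b :=
  cls_eq_cls_iff.2 (hP.exchange (hP.refl a b))

lemma cls_eq_cls_of_cls_eq_cls (h : cls P hP a b = cls P hP a' b')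
    (h' : cls P hP b c = cls P hP b' c') : cls P hP a c = cls P hP a' c' :=
  cls_eq_cls_iff.2 (hP.glue (cls_eq_cls_iff.1 h) (cls_eq_cls_iff.1 h'))

lemma exists_cls_fst_eq (a : X) (u : Base P hP) : ∃ b, cls P hP a b = u := by
  obtain ⟨⟨c, d⟩, rfl⟩ := Quotient.exists_rep u
  obtain ⟨b, hb⟩ := hP.exists_completion c d a
  exact ⟨b, cls_eq_cls_iff.2 (hP.symm hb)⟩

lemma exists_cls_snd_eq (b : X) (u : Base P hP) : ∃ a, cls P hP a b = u := by
  obtain ⟨⟨c, d⟩, rfl⟩ := Quotient.exists_rep u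
  obtain ⟨a, ha⟩ := hP.exists_completion d b c
  exact ⟨a, cls_eq_cls_iff.2 (hP.symm (hP.exchange (hP.symm ha)))⟩

lemma exists_cls_cls_eq (u v : Base P hP) :
    ∃ a b c, cls P hP a b = u ∧ cls P hP b c = v := by
  obtain ⟨⟨a, b⟩, rfl⟩ := Quotient.exists_rep u
  obtain ⟨c, rfl⟩ := exists_cls_fst_eq b v
  exact ⟨a, b, c, rfl, rfl⟩

variable (P hP) in
def IsChaslesMul (mul : Base P hP → Base P hP → Base P hP) : Prop :=
  ∀ a b c : X, mul (cls P hP a b) (cls P hP b c) = cls P hP a c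

lemma exists_isChaslesMul : ∃ mul, IsChaslesMul P hP mul := by
  choose fst mid snd h using exists_cls_cls_eq (hP := hP)
  refine ⟨fun u v => cls P hP (fst u v) (snd u v), fun a b c => ?_⟩
  obtain ⟨h₁, h₂⟩ := h (cls P hP a b) (cls P hP b c)
  exact cls_eq_cls_of_cls_eq_cls h₁ h₂

namespace IsChaslesMul

variable {mul : Base P hP → Base P hP → Base P hP} (hmul : IsChaslesMul P hP mul)
include hmul

lemma eq {mul' : Base P hP → Base P hP → Base P hP} (hmul' : IsChaslesMul P hP mul') :
    mul = mul' := by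
  funext u v
  obtain ⟨a, b, c, rfl, rfl⟩ := exists_cls_cls_eq u v
  rw [hmul, hmul']

lemma assoc (u v w : Base P hP) : mul (mul u v) w = mul u (mul v w) := by
  obtain ⟨a, b, c, rfl, rfl⟩ := exists_cls_cls_eq u v
  obtain ⟨d, rfl⟩ := exists_cls_fst_eq c w
  rw [hmul a b c, hmul a c d, hmul b c d, hmul a b d]

lemma comm (u v : Base P hP) : mul u v = mul v u := by
  obtain ⟨a, b, c, rfl, rfl⟩ := exists_cls_cls_eq u v
  obtain ⟨d, hd⟩ := exists_cls_fst_eq c (cls P hP a b)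
  rw [hmul, ← hd, hmul, cls_eq_cls_iff]
  exact hP.exchange (hP.symm (cls_eq_cls_iff.1 hd))

lemma cls_self_mul (a : X) (u : Base P hP) : mul (cls P hP a a) u = u := by
  obtain ⟨b, rfl⟩ := exists_cls_fst_eq a u
  exact hmul a a b

lemma mul_cls_self (a : X) (u : Base P hP) : mul u (cls P hP a a) = u := by
  obtain ⟨b, rfl⟩ := exists_cls_snd_eq a u
  exact hmul b a a

lemma cls_mul_cls_swap (a b : X) : mul (cls P hP a b) (cls P hP b a) = cls P hP a a :=
  hmul a b a

end IsChaslesMul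

end Base

theorem base_abelian_group_general (X : Type) (P : Set (Quad X))
    (hP : IsWeakParallelogram P) :
    (∃! mul : Base P hP → Base P hP → Base P hP,
      ∀ a b c : X, mul (cls P hP a b) (cls P hP b c) = cls P hP a c) ∧
    (∀ mul : Base P hP → Base P hP → Base P hP,
      (∀ a b c : X, mul (cls P hP a b) (cls P hP b c) = cls P hP a c) →
      (∀ u v w : Base P hP, mul (mul u v) w = mul u (mul v w)) ∧
      (∀ u v : Base P hP, mul u v = mul v u) ∧
      (∀ (a : X) (u : Base P hP), mul (cls P hP a a) u = u ∧ mul u (cls P hP a a) = u) ∧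
      (∀ a b a' : X, cls P hP a a = cls P hP a' a') ∧
      (∀ a b : X, mul (cls P hP a b) (cls P hP b a) = cls P hP a a ∧
        mul (cls P hP b a) (cls P hP a b) = cls P hP a a)) := by
  obtain ⟨mul, hmul⟩ := exists_isChaslesMul (hP := hP)
  refine ⟨⟨mul, hmul, fun mul' hmul' => IsChaslesMul.eq hmul' hmul⟩, fun mul hmul => ?_⟩
  replace hmul : IsChaslesMul P hP mul := hmul
  refine ⟨hmul.assoc, hmul.comm, fun a u => ⟨hmul.cls_self_mul a u, hmul.mul_cls_self a u⟩,
    fun a _ a' => cls_self_eq_cls_self a a', fun a b => ⟨hmul.cls_mul_cls_swap a b, ?_⟩⟩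
  rw [hmul.cls_mul_cls_swap, cls_self_eq_cls_self]

/-- The base `B = X²/∼` of a weak parallelogram structure carries a unique
multiplication satisfying `⟨a,b⟩·⟨b,c⟩ = ⟨a,c⟩`, and with it `B` is an abelian group whose
identity is the common class of the pairs `(a,a)` and where `⟨a,b⟩⁻¹ = ⟨b,a⟩`. -/
theorem base_abelian_group (X : Type) [Nonempty X] (P : Set (Quad X))
    (hP : IsWeakParallelogram P) :
    (∃! mul : Base P hP → Base P hP → Base P hP,
      ∀ a b c : X, mul (cls P hP a b) (cls P hP b c) = cls P hP a c) ∧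
    (∀ mul : Base P hP → Base P hP → Base P hP,
      (∀ a b c : X, mul (cls P hP a b) (cls P hP b c) = cls P hP a c) →
      (∀ u v w : Base P hP, mul (mul u v) w = mul u (mul v w)) ∧
      (∀ u v : Base P hP, mul u v = mul v u) ∧
      (∀ (a : X) (u : Base P hP), mul (cls P hP a a) u = u ∧ mul u (cls P hP a a) = u) ∧
      (∀ a b a' : X, cls P hP a a = cls P hP a' a') ∧
      (∀ a b : X, mul (cls P hP a b) (cls P hP b a) = cls P hP a a ∧
        mul (cls P hP b a) (cls P hP a b) = cls P hP a a)) :=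
  base_abelian_group_general X P hP

end HK
end

section
/- Let X be a nonempty set with a weak parallelogram structure 𝒫, and let 𝒬 ⊆ X^{[3]} satisfy properties (1), (2) and (3) of the definition of a weak parallelepiped structure (every face of every element of 𝒬 lies in 𝒫; invariance under Euclidean permutations; the relation ≈ is an equivalence relation), but not necessarily the closing property. For x,x' ∈ X the following are equivalent: (1) (x,x,x,x') ∈ 𝒫 and [x,x,x,x'] = 1_P; (2) for all a,b,c ∈ X with (a,b,c,x) ∈ 𝒫, one has (a,b,c,x') ∈ 𝒫 and [a,b,c,x] = [a,b,c,x']; (3) there exist a,b,c ∈ X with (a,b,c,x) ∈ 𝒫, (a,b,c,x') ∈ 𝒫, and [a,b,c,x] = [a,b,c,x']. -/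
open scoped Pointwise

namespace HK

variable {X Y : Type}

/-!
The cube symmetries exchanging the first coordinate with the second or the third turn an
equivalence `p ≈ q` between two opposite faces into one between another pair of opposite
faces. Rotating the cube `(a,b,c,x) | (a,b,c,x')` in this way shows that
`[a,b,c,x] = [a,b,c,x']` forces `(b,b,b,b) ≈ (x,x,x,x')`; conversely, stacking the cubes
`(a,b,a,b) | (c,x,c,x)` and `(c,x,c,x) | (c,x,c,x')`, the latter a rotation of
`(c,c,c,c) | (x,x,x,x')`, gives `[a,b,c,x] = [a,b,c,x']`. All constant parallelograms are
equivalent, being opposite faces of a rotation of `(a,a,b,b) | (a,a,b,b)`.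
-/

variable {X : Type}

def IsCubeSymmetric (Q : Set (Cube X)) : Prop :=
  ∀ (σ : Equiv.Perm (Fin 3)) (c : Vtx), ∀ x ∈ Q, (fun v => x (cubeSym σ c v)) ∈ Q

namespace IsWeakParallelogram

variable {P : Set (Quad X)} {a b c d e f : X}

theorem mem_refl (hP : IsWeakParallelogram P) (a b : X) : (a, b, a, b) ∈ P :=
  hP.1 a b

theorem mem_symm (hP : IsWeakParallelogram P) (h : (a, b, c, d) ∈ P) : (c, d, a, b) ∈ P :=
  hP.2.1 _ _ _ _ h

theorem mem_trans (hP : IsWeakParallelogram P) (h : (a, b, c, d) ∈ P) (h' : (c, d, e, f) ∈ P) :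
    (a, b, e, f) ∈ P :=
  hP.2.2.1 _ _ _ _ _ _ h h'

theorem mem_swap (hP : IsWeakParallelogram P) (h : (a, b, c, d) ∈ P) : (a, c, b, d) ∈ P :=
  hP.2.2.2.1 _ _ _ _ h

theorem diag_mem (hP : IsWeakParallelogram P) (a b : X) : (a, a, b, b) ∈ P :=
  hP.mem_swap (hP.mem_refl a b)

theorem mem_of_diag_mem (hP : IsWeakParallelogram P) {x x' : X}
    (hx : (x, x, x, x') ∈ P) (h : (a, b, c, x) ∈ P) : (a, b, c, x') ∈ P :=
  hP.mem_swap (hP.mem_trans (hP.mem_swap h) (hP.mem_swap (hP.mem_trans (hP.diag_mem b x) hx)))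

theorem diag_mem_of_mem_of_mem (hP : IsWeakParallelogram P) {x x' : X}
    (h : (a, b, c, x) ∈ P) (h' : (a, b, c, x') ∈ P) : (x, x, x, x') ∈ P :=
  hP.mem_trans (hP.mem_symm (hP.diag_mem b x))
    (hP.mem_swap (hP.mem_trans (hP.mem_symm (hP.mem_swap h)) (hP.mem_swap h')))

end IsWeakParallelogram

theorem joinQuad_comp_cubeSym_swap_zero_one (p₁ p₂ p₃ p₄ q₁ q₂ q₃ q₄ : X) :
    (fun v => joinQuad (p₁, p₂, p₃, p₄) (q₁, q₂, q₃, q₄)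
      (cubeSym (Equiv.swap 0 1) (fun _ => false) v)) =
      joinQuad (p₁, p₂, q₁, q₂) (p₃, p₄, q₃, q₄) := by
  funext v
  simp only [joinQuad, cubeSym, Fin.isValue, Equiv.swap_apply_left, Bool.bne_false,
    Equiv.swap_apply_right, Equiv.swap_apply_def, Fin.reduceEq, ↓reduceIte]
  cases v 0 <;> cases v 1 <;> cases v 2 <;> rfl

theorem joinQuad_comp_cubeSym_swap_zero_two (p₁ p₂ p₃ p₄ q₁ q₂ q₃ q₄ : X) :
    (fun v => joinQuad (p₁, p₂, p₃, p₄) (q₁, q₂, q₃, q₄)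
      (cubeSym (Equiv.swap 0 2) (fun _ => false) v)) =
      joinQuad (p₁, q₁, p₃, q₃) (p₂, q₂, p₄, q₄) := by
  funext v
  simp only [joinQuad, cubeSym, Fin.isValue, Equiv.swap_apply_left, Bool.bne_false,
    Equiv.swap_apply_right, Equiv.swap_apply_def, one_ne_zero, Fin.reduceEq, ↓reduceIte]
  cases v 0 <;> cases v 1 <;> cases v 2 <;> rfl

namespace IsCubeSymmetric

variable {Q : Set (Cube X)}

theorem joinQuad_swap_zero_one (hQ : IsCubeSymmetric Q) {p₁ p₂ p₃ p₄ q₁ q₂ q₃ q₄ : X}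
    (h : joinQuad (p₁, p₂, p₃, p₄) (q₁, q₂, q₃, q₄) ∈ Q) :
    joinQuad (p₁, p₂, q₁, q₂) (p₃, p₄, q₃, q₄) ∈ Q := by
  simpa only [joinQuad_comp_cubeSym_swap_zero_one] using hQ (Equiv.swap 0 1) (fun _ => false) _ h

theorem joinQuad_swap_zero_two (hQ : IsCubeSymmetric Q) {p₁ p₂ p₃ p₄ q₁ q₂ q₃ q₄ : X}
    (h : joinQuad (p₁, p₂, p₃, p₄) (q₁, q₂, q₃, q₄) ∈ Q) :
    joinQuad (p₁, q₁, p₃, q₃) (p₂, q₂, p₄, q₄) ∈ Q := by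
  simpa only [joinQuad_comp_cubeSym_swap_zero_two] using hQ (Equiv.swap 0 2) (fun _ => false) _ h

variable {P : Set (Quad X)}

theorem joinQuad_const_mem (hQ : IsCubeSymmetric Q) (hP : IsWeakParallelogram P)
    (hrefl : ∀ p ∈ P, joinQuad p p ∈ Q) (a b : X) :
    joinQuad (a, a, a, a) (b, b, b, b) ∈ Q :=
  hQ.joinQuad_swap_zero_one (hrefl _ (hP.diag_mem a b))

theorem joinQuad_mem_of_const_joinQuad_mem (hQ : IsCubeSymmetric Q)
    (hrefl : ∀ p ∈ P, joinQuad p p ∈ Q)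
    (htrans : ∀ p q r : Quad X, joinQuad p q ∈ Q → joinQuad q r ∈ Q → joinQuad p r ∈ Q)
    {a b c x x' : X} (h : (a, b, c, x) ∈ P) (hx : joinQuad (c, c, c, c) (x, x, x, x') ∈ Q) :
    joinQuad (a, b, c, x) (a, b, c, x') ∈ Q := by
  have hab : joinQuad (a, b, a, b) (c, x, c, x) ∈ Q := hQ.joinQuad_swap_zero_one (hrefl _ h)
  have hcx : joinQuad (c, x, c, x) (c, x, c, x') ∈ Q := hQ.joinQuad_swap_zero_two hx
  exact hQ.joinQuad_swap_zero_one (htrans _ _ _ hab hcx)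

theorem const_joinQuad_mem_of_joinQuad_mem (hQ : IsCubeSymmetric Q)
    (hrefl : ∀ p ∈ P, joinQuad p p ∈ Q)
    (hsymm : ∀ p q : Quad X, joinQuad p q ∈ Q → joinQuad q p ∈ Q)
    (htrans : ∀ p q r : Quad X, joinQuad p q ∈ Q → joinQuad q r ∈ Q → joinQuad p r ∈ Q)
    {a b c x x' : X} (h : (a, b, c, x) ∈ P) (hx : joinQuad (a, b, c, x) (a, b, c, x') ∈ Q) :
    joinQuad (b, b, b, b) (x, x, x, x') ∈ Q := by
  have hx' : joinQuad (a, a, c, c) (b, b, x, x') ∈ Q := hQ.joinQuad_swap_zero_two hx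
  have hxx : joinQuad (a, a, c, c) (b, b, x, x) ∈ Q := hQ.joinQuad_swap_zero_two (hrefl _ h)
  exact hQ.joinQuad_swap_zero_one (htrans _ _ _ (hsymm _ _ hxx) hx')

end IsCubeSymmetric

/-- `[p] = 1_P` is expressed as `p ≈ (a,a,a,a)` for every `a`, and `[p] = [p']` as `p ≈ p'`. -/
theorem trivial_class_tfae_general (X : Type) (P : Set (Quad X)) (Q : Set (Cube X))
    (hP : IsWeakParallelogram P)
    (hsym : ∀ (σ : Equiv.Perm (Fin 3)) (c : Vtx), ∀ x ∈ Q, (fun v => x (cubeSym σ c v)) ∈ Q)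
    (hrefl : ∀ p ∈ P, joinQuad p p ∈ Q)
    (hQsymm : ∀ p q : Quad X, joinQuad p q ∈ Q → joinQuad q p ∈ Q)
    (hQtrans : ∀ p q r : Quad X, joinQuad p q ∈ Q → joinQuad q r ∈ Q → joinQuad p r ∈ Q)
    (x x' : X) :
    List.TFAE [
      (x, x, x, x') ∈ P ∧ ∀ a : X, joinQuad (x, x, x, x') (a, a, a, a) ∈ Q,
      ∀ a b c : X, (a, b, c, x) ∈ P →
        (a, b, c, x') ∈ P ∧ joinQuad (a, b, c, x) (a, b, c, x') ∈ Q,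
      ∃ a b c : X, (a, b, c, x) ∈ P ∧ (a, b, c, x') ∈ P ∧
        joinQuad (a, b, c, x) (a, b, c, x') ∈ Q] := by
  have hQ : IsCubeSymmetric Q := hsym
  tfae_have 1 → 2 := fun ⟨hxP, hxQ⟩ a b c h =>
    ⟨hP.mem_of_diag_mem hxP h,
      hQ.joinQuad_mem_of_const_joinQuad_mem hrefl hQtrans h (hQsymm _ _ (hxQ c))⟩
  tfae_have 2 → 3 := fun h =>
    have hx := hP.mem_refl x x
    ⟨x, x, x, hx, h x x x hx⟩
  tfae_have 3 → 1 := by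
    rintro ⟨a, b, c, h, h', hQx⟩
    have hb : joinQuad (b, b, b, b) (x, x, x, x') ∈ Q :=
      hQ.const_joinQuad_mem_of_joinQuad_mem hrefl hQsymm hQtrans h hQx
    exact ⟨hP.diag_mem_of_mem_of_mem h h', fun e =>
      hQtrans _ _ _ (hQsymm _ _ hb) (hQ.joinQuad_const_mem hP hrefl b e)⟩
  tfae_finish

/-- For `Q` satisfying the first three axioms of a weak parallelepiped
structure over a weak parallelogram structure `P` (but not necessarily the closing
property), the three characterizations of `x ≡_Q x'` are equivalent.  Here `[p] = 1_P`
is expressed as `p ≈ (a,a,a,a)` for every `a`, and `[p] = [p']` as `p ≈ p'`. -/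
theorem trivial_class_tfae (X : Type) [Nonempty X] (P : Set (Quad X)) (Q : Set (Cube X))
    (hP : IsWeakParallelogram P)
    (hfaces : ∀ x ∈ Q, ∀ (i : Fin 3) (b : Bool), face x i b ∈ P)
    (hsym : ∀ (σ : Equiv.Perm (Fin 3)) (c : Vtx), ∀ x ∈ Q, (fun v => x (cubeSym σ c v)) ∈ Q)
    (hrefl : ∀ p ∈ P, joinQuad p p ∈ Q)
    (hQsymm : ∀ p q : Quad X, joinQuad p q ∈ Q → joinQuad q p ∈ Q)
    (hQtrans : ∀ p q r : Quad X, joinQuad p q ∈ Q → joinQuad q r ∈ Q → joinQuad p r ∈ Q)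
    (x x' : X) :
    List.TFAE [
      (x, x, x, x') ∈ P ∧ ∀ a : X, joinQuad (x, x, x, x') (a, a, a, a) ∈ Q,
      ∀ a b c : X, (a, b, c, x) ∈ P →
        (a, b, c, x') ∈ P ∧ joinQuad (a, b, c, x) (a, b, c, x') ∈ Q,
      ∃ a b c : X, (a, b, c, x) ∈ P ∧ (a, b, c, x') ∈ P ∧
        joinQuad (a, b, c, x) (a, b, c, x') ∈ Q] :=
  trivial_class_tfae_general X P Q hP hsym hrefl hQsymm hQtrans x x'

end HK
end

section
/- Let G be a group. Then: (i) G^{[3,2]} ⊇ G₂^{[3,1]} ⊇ G₃^{[3,3]} (the diagonal copy of G₃ in G⁸); (ii) for g ∈ G and any vertex η of the cube {0,1}³, the element g^{[3,{η}]} belongs to G^{[3,2]} if and only if g ∈ G₃; (iii) the set K := G^{[2,2]}·G₂^{[2,1]}·G₃^{[2]} is a normal subgroup of G^{[2,1]}, and under the identification of G^{[3]} with G^{[2]} × G^{[2]} via the splitting of {0,1}³ into the opposite faces ε₁ = 0 and ε₁ = 1, one has G^{[3,2]} = {(g',g'') ∈ G^{[2,1]} × G^{[2,1]} : g'·(g'')⁻¹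 ∈ K}. -/
open scoped Pointwise

namespace HK

variable {X Y : Type}

/-!
Commutators of cube elements are computed coordinatewise:
`⁅g^{[3,α]}, h^{[3,β]}⁆ = ⁅g,h⁆^{[3,α∩β]}`. Two faces meet in an edge and a face meets an edge
in a vertex, so `G^{[3,2]}` contains the edge elements of `G₂` and the vertex elements of `G₃`;
a diagonal element is a product of four parallel edge elements. This gives (i) and one half
of (ii).

For (iii), write a cube as the pair `(g', g'')` of its faces `ε₁ = 0` and `ε₁ = 1`. Modulo the
normal subgroup `G₂^{[2,1]} G₃^{[2]}` of `G^{[2]}` the diagonal commutes with the generators of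
`G^{[2,1]}`, hence `G^{[2,1]}` normalizes `K`, and the pairs `(g', g'') ∈ G^{[2,1]} × G^{[2,1]}`
with `g' g''⁻¹ ∈ K` form a subgroup. It contains the face generators, and conversely
`(g', g'') = (g' g''⁻¹, 1) (g'', g'')` where both factors are products of face, edge and vertex
elements.

For the other half of (ii): modulo `G₃` the image of `G₂` is central, and every element of `K`
becomes `(a, a v, a u, a u v)` with `u, v` central, so `c⁻¹ a b⁻¹ d ∈ G₃` for
`(a, b, c, d) ∈ K`. For the face difference of a vertex element `g^{[3,{η}]}` this quantity
is `g^{±1}`.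
-/

open scoped commutatorElement

section CubeCombinatorics

lemma exists_eq_vec3 (v : Vtx) : ∃ a b c : Bool, v = ![a, b, c] :=
  ⟨v 0, v 1, v 2, by funext i; fin_cases i <;> rfl⟩

lemma singleton_eq_inter (η : Vtx) :
    ({η} : Set Vtx) = {v : Vtx | v 0 = η 0} ∩ {v : Vtx | v 1 = η 1 ∧ v 2 = η 2} := by
  ext v
  simp [funext_iff, Fin.forall_fin_succ]

lemma Cube.ext_vec3 {x y : Cube X} (h : ∀ a b c : Bool, x ![a, b, c] = y ![a, b, c]) :
    x = y := by
  funext v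
  obtain ⟨a, b, c, rfl⟩ := exists_eq_vec3 v
  exact h a b c

lemma joinQuad_face (x : Cube X) : joinQuad (face x 0 false) (face x 0 true) = x :=
  Cube.ext_vec3 fun a b c => by cases a <;> cases b <;> cases c <;> rfl

end CubeCombinatorics

section Commutators

variable {G : Type} [Group G]

lemma commutatorElement_mem {H : Subgroup G} {a b : G} (ha : a ∈ H) (hb : b ∈ H) :
    ⁅a, b⁆ ∈ H := by
  rw [commutatorElement_def]
  exact mul_mem (mul_mem (mul_mem ha hb) (inv_mem ha)) (inv_mem hb)

instance secondCommutator_normal : (secondCommutator G).Normal := by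
  unfold secondCommutator; infer_instance

lemma secondCommutator_le_commutator : secondCommutator G ≤ commutator G :=
  Subgroup.commutator_le_right _ _

lemma commutatorElement_mem_commutator (g h : G) : ⁅g, h⁆ ∈ commutator G :=
  Subgroup.commutator_mem_commutator (Subgroup.mem_top g) (Subgroup.mem_top h)

lemma commutatorElement_mem_secondCommutator (g : G) {u : G} (hu : u ∈ commutator G) :
    ⁅g, u⁆ ∈ secondCommutator G :=
  Subgroup.commutator_mem_commutator (Subgroup.mem_top g) hu

lemma mk_mem_center_of_mem_commutator {u : G} (hu : u ∈ commutator G) :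
    (u : G ⧸ secondCommutator G) ∈ Subgroup.center (G ⧸ secondCommutator G) := by
  refine Subgroup.mem_center_iff.2 fun x => QuotientGroup.induction_on x fun g => ?_
  rw [← QuotientGroup.mk_mul, ← QuotientGroup.mk_mul, QuotientGroup.eq]
  have h : (g * u)⁻¹ * (u * g) = ⁅g⁻¹, u⁻¹⁆⁻¹ := by group
  rw [h]
  exact inv_mem (commutatorElement_mem_secondCommutator _ (inv_mem hu))

end Commutators

section CubeElements

variable {G : Type} [Group G]

noncomputable def cubeEltHom (α : Set Vtx) : G →* Cube G where
  toFun := cubeElt α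
  map_one' := by funext v; simp [cubeElt]
  map_mul' g h := by funext v; by_cases hv : v ∈ α <;> simp [cubeElt, hv]

lemma cubeElt_inter_commutatorElement (α β : Set Vtx) (g h : G) :
    cubeElt (α ∩ β) ⁅g, h⁆ = ⁅cubeElt α g, cubeElt β h⁆ := by
  funext v
  by_cases ha : v ∈ α <;> by_cases hb : v ∈ β <;>
    simp [cubeElt, commutatorElement_def, ha, hb]

lemma cubeElt_mem_faceGroup {α : Set Vtx} (hα : IsFace3 α) (g : G) :
    cubeElt α g ∈ faceGroup G :=
  Subgroup.subset_closure ⟨g, α, hα, rfl⟩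

lemma cubeElt_inter_mem_faceGroup {α β : Set Vtx} {A B : Subgroup G}
    (hA : ∀ a ∈ A, cubeElt α a ∈ faceGroup G)
    (hB : ∀ b ∈ B, cubeElt β b ∈ faceGroup G) {g : G} (hg : g ∈ ⁅A, B⁆) :
    cubeElt (α ∩ β) g ∈ faceGroup G := by
  have hle : ⁅A, B⁆ ≤ (faceGroup G).comap (cubeEltHom (α ∩ β)) := by
    refine Subgroup.commutator_le.2 fun a ha b hb => ?_
    show cubeElt (α ∩ β) ⁅a, b⁆ ∈ faceGroup G
    rw [cubeElt_inter_commutatorElement]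
    exact commutatorElement_mem (hA a ha) (hB b hb)
  exact hle hg

lemma cubeElt_edge_mem_faceGroup (i j : Fin 3) (b c : Bool) {u : G} (hu : u ∈ commutator G) :
    cubeElt {v : Vtx | v i = b ∧ v j = c} u ∈ faceGroup G :=
  cubeElt_inter_mem_faceGroup (A := ⊤) (B := ⊤)
    (fun a _ => cubeElt_mem_faceGroup ⟨i, b, rfl⟩ a)
    (fun a _ => cubeElt_mem_faceGroup ⟨j, c, rfl⟩ a) hu

lemma cubeElt_singleton_mem_faceGroup (η : Vtx) {g : G} (hg : g ∈ secondCommutator G) :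
    cubeElt {η} g ∈ faceGroup G := by
  rw [singleton_eq_inter η]
  exact cubeElt_inter_mem_faceGroup (A := ⊤) (B := commutator G)
    (fun a _ => cubeElt_mem_faceGroup ⟨0, η 0, rfl⟩ a)
    (fun b hb => cubeElt_edge_mem_faceGroup 1 2 (η 1) (η 2) hb) hg

lemma edgeGroup3_commutator_le_faceGroup : edgeGroup3 (commutator G) ≤ faceGroup G := by
  refine (Subgroup.closure_le _).2 ?_
  rintro _ ⟨u, hu, _, ⟨i, j, b, c, -, rfl⟩, rfl⟩
  exact cubeElt_edge_mem_faceGroup i j b c hu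

lemma map_diagHom3_le_edgeGroup3 (F : Subgroup G) :
    Subgroup.map (diagHom3 G) F ≤ edgeGroup3 F := by
  rintro _ ⟨u, hu, rfl⟩
  have hedge : ∀ b c : Bool, cubeElt {v : Vtx | v 0 = b ∧ v 1 = c} u ∈ edgeGroup3 F :=
    fun b c => Subgroup.subset_closure ⟨u, hu, _, ⟨0, 1, b, c, by decide, rfl⟩, rfl⟩
  have hdiag : diagHom3 G u = cubeElt {v : Vtx | v 0 = false ∧ v 1 = false} u *
      cubeElt {v : Vtx | v 0 = false ∧ v 1 = true} u *
      cubeElt {v : Vtx | v 0 = true ∧ v 1 = false} u *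
      cubeElt {v : Vtx | v 0 = true ∧ v 1 = true} u := by
    funext v
    cases h0 : v 0 <;> cases h1 : v 1 <;> simp [diagHom3, cubeElt, h0, h1]
  rw [hdiag]
  exact mul_mem (mul_mem (mul_mem (hedge _ _) (hedge _ _)) (hedge _ _)) (hedge _ _)

end CubeElements

section SquareGroups

variable {G : Type} [Group G]

lemma mem_edgeGroup2_1100 (g : G) : ((g, g, 1, 1) : Quad G) ∈ edgeGroup2 G :=
  Subgroup.subset_closure ⟨g, Or.inl rfl⟩

lemma mem_edgeGroup2_1010 (g : G) : ((g, 1, g, 1) : Quad G) ∈ edgeGroup2 G :=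
  Subgroup.subset_closure ⟨g, Or.inr (Or.inl rfl)⟩

lemma mem_edgeGroup2_diag (g : G) : ((g, g, g, g) : Quad G) ∈ edgeGroup2 G :=
  Subgroup.subset_closure ⟨g, Or.inr (Or.inr rfl)⟩

lemma mem_edgeGroup2_0101 (g : G) : ((1, g, 1, g) : Quad G) ∈ edgeGroup2 G := by
  have h : ((1, g, 1, g) : Quad G) = (g, g, g, g) * (g, 1, g, 1)⁻¹ := by simp
  rw [h]
  exact mul_mem (mem_edgeGroup2_diag g) (inv_mem (mem_edgeGroup2_1010 g))

lemma mem_edgeGroup2_0011 (g : G) : ((1, 1, g, g) : Quad G) ∈ edgeGroup2 G := by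
  have h : ((1, 1, g, g) : Quad G) = (g, g, g, g) * (g, g, 1, 1)⁻¹ := by simp
  rw [h]
  exact mul_mem (mem_edgeGroup2_diag g) (inv_mem (mem_edgeGroup2_1100 g))

lemma mem_edgeGroup2_0001 {w : G} (hw : w ∈ commutator G) :
    ((1, 1, 1, w) : Quad G) ∈ edgeGroup2 G := by
  let ι : G →* Quad G := (MonoidHom.inr G _).comp ((MonoidHom.inr G _).comp (MonoidHom.inr G G))
  have hle : commutator G ≤ (edgeGroup2 G).comap ι := by
    rw [commutator_def]
    refine Subgroup.commutator_le.2 fun a _ b _ => ?_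
    have h : ι ⁅a, b⁆ = ⁅((1, a, 1, a) : Quad G), ((1, 1, b, b) : Quad G)⁆ := by
      simp [ι, commutatorElement_def]
    rw [Subgroup.mem_comap, h]
    exact commutatorElement_mem (mem_edgeGroup2_0101 a) (mem_edgeGroup2_0011 b)
  exact hle hw

lemma mem_edgeGroup2_of {a b c d : G} (h : c⁻¹ * a * b⁻¹ * d ∈ commutator G) :
    ((a, b, c, d) : Quad G) ∈ edgeGroup2 G := by
  have key : ((a, b, c, d) : Quad G) = (a, a, a, a) * (1, a⁻¹ * b, 1, a⁻¹ * b) *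
      (1, 1, a⁻¹ * c, a⁻¹ * c) * (1, 1, 1, c⁻¹ * a * b⁻¹ * d) := by
    simp only [Prod.mk_mul_mk, Prod.mk.injEq]
    and_intros <;> group
  rw [key]
  exact mul_mem (mul_mem (mul_mem (mem_edgeGroup2_diag a) (mem_edgeGroup2_0101 _))
    (mem_edgeGroup2_0011 _)) (mem_edgeGroup2_0001 h)

lemma mem_quadSub {F : Subgroup G} {p : Quad G} :
    p ∈ quadSub F ↔ p.1 ∈ F ∧ p.2.1 ∈ F ∧ p.2.2.1 ∈ F ∧ p.2.2.2 ∈ F := by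
  simp [quadSub, Subgroup.mem_prod]

lemma quadSub_commutator_le_edgeGroup2 : quadSub (commutator G) ≤ edgeGroup2 G := by
  rintro ⟨a, b, c, d⟩ hp
  obtain ⟨ha, hb, hc, hd⟩ := mem_quadSub.1 hp
  exact mem_edgeGroup2_of (mul_mem (mul_mem (mul_mem (inv_mem hc) ha) (inv_mem hb)) hd)

lemma edgeGroup2Of_le_quadSub (F : Subgroup G) : edgeGroup2Of F ≤ quadSub F := by
  refine (Subgroup.closure_le _).2 ?_
  rintro _ ⟨u, hu, rfl | rfl | rfl⟩ <;> simp [mem_quadSub, hu]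

lemma commutatorElement_mem_quadSub (g : Quad G) {q : Quad G}
    (hq : q ∈ quadSub (commutator G)) : ⁅g, q⁆ ∈ quadSub (secondCommutator G) := by
  obtain ⟨h1, h2, h3, h4⟩ := mem_quadSub.1 hq
  exact mem_quadSub.2 ⟨commutatorElement_mem_secondCommutator _ h1,
    commutatorElement_mem_secondCommutator _ h2, commutatorElement_mem_secondCommutator _ h3,
    commutatorElement_mem_secondCommutator _ h4⟩

end SquareGroups

section FaceDiffGroup

variable {G : Type} [Group G]

instance quadSub_normal (F : Subgroup G) [F.Normal] : (quadSub F).Normal := by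
  unfold quadSub; infer_instance

lemma quadSub_mono {F F' : Subgroup G} (h : F ≤ F') : quadSub F ≤ quadSub F' :=
  Subgroup.prod_mono h (Subgroup.prod_mono h (Subgroup.prod_mono h h))

variable (G) in
def edgeSupQuad : Subgroup (Quad G) :=
  edgeGroup2Of (commutator G) ⊔ quadSub (secondCommutator G)

variable (G) in
/-- The paper's `K = G^{[2,2]} G₂^{[2,1]} G₃^{[2]}`. -/
def faceDiffGroup : Subgroup (Quad G) :=
  Subgroup.map (diagHom2 G) ⊤ ⊔ edgeSupQuad G

lemma diag_mem_faceDiffGroup (g : G) : ((g, g, g, g) : Quad G) ∈ faceDiffGroup G :=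
  le_sup_left (b := edgeSupQuad G) ⟨g, trivial, rfl⟩

lemma edgeSupQuad_le_faceDiffGroup : edgeSupQuad G ≤ faceDiffGroup G :=
  le_sup_right

lemma edgeSupQuad_le_quadSub : edgeSupQuad G ≤ quadSub (commutator G) :=
  sup_le (edgeGroup2Of_le_quadSub _) (quadSub_mono secondCommutator_le_commutator)

instance edgeSupQuad_normal : (edgeSupQuad G).Normal := by
  refine ⟨fun n hn g => ?_⟩
  have h : g * n * g⁻¹ = ⁅g, n⁆ * n := by group
  rw [h]
  exact mul_mem ((le_sup_right : _ ≤ edgeSupQuad G)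
    (commutatorElement_mem_quadSub g (edgeSupQuad_le_quadSub hn))) hn

lemma coe_faceDiffGroup : (faceDiffGroup G : Set (Quad G)) =
    (Subgroup.map (diagHom2 G) ⊤ : Set (Quad G)) * (edgeGroup2Of (commutator G) : Set (Quad G)) *
      (quadSub (secondCommutator G) : Set (Quad G)) := by
  rw [faceDiffGroup, Subgroup.mul_normal, edgeSupQuad, Subgroup.mul_normal, mul_assoc]

lemma faceDiffGroup_le_edgeGroup2 : faceDiffGroup G ≤ edgeGroup2 G := by
  refine sup_le ?_ (edgeSupQuad_le_quadSub.trans quadSub_commutator_le_edgeGroup2)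
  rintro _ ⟨g, -, rfl⟩
  exact mem_edgeGroup2_diag g

lemma commutatorElement_diag_mem_edgeSupQuad {x : Quad G} (hx : x ∈ edgeGroup2 G) (g : G) :
    ⁅x, diagHom2 G g⁆ ∈ edgeSupQuad G := by
  -- Modulo the normal subgroup `edgeSupQuad G`, the elements commuting with the diagonal
  -- element form a subgroup, so it suffices to check the generators of `G^{[2,1]}`.
  let π := QuotientGroup.mk' (edgeSupQuad G)
  have hcomm : ∀ y, y ∈ (Subgroup.centralizer {π (diagHom2 G g)}).comap π ↔
      ⁅y, diagHom2 G g⁆ ∈ edgeSupQuad G := fun y => by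
    rw [Subgroup.mem_comap, Subgroup.mem_centralizer_singleton_iff, ← QuotientGroup.eq_one_iff,
      ← QuotientGroup.mk'_apply, map_commutatorElement, commutatorElement_eq_one_iff_mul_comm]
  refine (hcomm x).1 ((Subgroup.closure_le _).2 ?_ hx)
  have hE : edgeGroup2Of (commutator G) ≤ edgeSupQuad G := le_sup_left
  rintro _ ⟨h, rfl | rfl | rfl⟩ <;>
    refine (hcomm _).2 (hE (Subgroup.subset_closure
      ⟨⁅h, g⁆, commutatorElement_mem_commutator h g, ?_⟩)) <;>
    simp [diagHom2, commutatorElement_def]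

lemma conj_mem_faceDiffGroup {x k : Quad G} (hx : x ∈ edgeGroup2 G) (hk : k ∈ faceDiffGroup G) :
    x * k * x⁻¹ ∈ faceDiffGroup G := by
  rw [← SetLike.mem_coe, faceDiffGroup, Subgroup.mul_normal] at hk
  obtain ⟨_, ⟨g, -, rfl⟩, m, hm, rfl⟩ := hk
  have h : x * (diagHom2 G g * m) * x⁻¹ =
      ⁅x, diagHom2 G g⁆ * diagHom2 G g * (x * m * x⁻¹) := by
    group
  rw [h]
  exact mul_mem
    (mul_mem (edgeSupQuad_le_faceDiffGroup (commutatorElement_diag_mem_edgeSupQuad hx g))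
      (diag_mem_faceDiffGroup g))
    (edgeSupQuad_le_faceDiffGroup (edgeSupQuad_normal.conj_mem m hm x))

end FaceDiffGroup

section CentralParallelograms

variable {G Q : Type} [Group G] [Group Q]

variable (Q) in
def centralParallelogramHom : Q × Subgroup.center Q × Subgroup.center Q →* Quad Q where
  toFun t := (t.1, t.1 * t.2.2, t.1 * t.2.1, t.1 * t.2.1 * t.2.2)
  map_one' := by simp
  map_mul' s t := by
    have hu (g : Q) : Commute g s.2.1 := Subgroup.mem_center_iff.1 s.2.1.2 g
    have hv (g : Q) : Commute g s.2.2 := Subgroup.mem_center_iff.1 s.2.2.2 g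
    simp only [Prod.fst_mul, Prod.snd_mul, Subgroup.coe_mul, Prod.mk_mul_mk, Prod.mk.injEq]
    refine ⟨trivial, (hv _).mul_mul_mul_comm _ _, (hu _).mul_mul_mul_comm _ _, ?_⟩
    rw [(hu _).mul_mul_mul_comm, (hv _).mul_mul_mul_comm]

def quadAltProd (p : Quad G) : G := p.2.2.1⁻¹ * p.1 * p.2.1⁻¹ * p.2.2.2

lemma quadAltProd_centralParallelogramHom (t : Q × Subgroup.center Q × Subgroup.center Q) :
    quadAltProd (centralParallelogramHom Q t) = 1 := by
  have hu := Subgroup.mem_center_iff.1 t.2.1.2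
  simp only [quadAltProd, centralParallelogramHom, MonoidHom.coe_mk, OneHom.coe_mk]
  simp [mul_assoc, ← hu]

def quadMapHom (f : G →* Q) : Quad G →* Quad Q := f.prodMap (f.prodMap (f.prodMap f))

lemma quadAltProd_quadMapHom (f : G →* Q) (p : Quad G) :
    quadAltProd (quadMapHom f p) = f (quadAltProd p) := by
  simp [quadAltProd, quadMapHom]

lemma faceDiffGroup_le_comap :
    faceDiffGroup G ≤ (centralParallelogramHom (G ⧸ secondCommutator G)).range.comap
      (quadMapHom (QuotientGroup.mk' (secondCommutator G))) := by
  refine sup_le ?_ (sup_le ?_ ?_)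
  · rintro _ ⟨g, -, rfl⟩
    exact ⟨((g : G ⧸ secondCommutator G), 1, 1),
      by simp [centralParallelogramHom, quadMapHom, diagHom2]⟩
  · refine (Subgroup.closure_le _).2 ?_
    rintro _ ⟨u, hu, rfl | rfl | rfl⟩ <;>
      have hz := inv_mem (mk_mem_center_of_mem_commutator hu)
    · exact ⟨(u, ⟨_, hz⟩, 1), by simp [centralParallelogramHom, quadMapHom]⟩
    · exact ⟨(u, 1, ⟨_, hz⟩), by simp [centralParallelogramHom, quadMapHom]⟩
    · exact ⟨(u, 1, 1), by simp [centralParallelogramHom, quadMapHom]⟩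
  · rintro ⟨a, b, c, d⟩ hp
    obtain ⟨ha, hb, hc, hd⟩ := mem_quadSub.1 hp
    refine ⟨1, ?_⟩
    simp [centralParallelogramHom, quadMapHom, (QuotientGroup.eq_one_iff _).2 ha,
      (QuotientGroup.eq_one_iff _).2 hb, (QuotientGroup.eq_one_iff _).2 hc,
      (QuotientGroup.eq_one_iff _).2 hd]

lemma quadAltProd_mem_secondCommutator {k : Quad G} (hk : k ∈ faceDiffGroup G) :
    quadAltProd k ∈ secondCommutator G := by
  obtain ⟨t, ht⟩ := faceDiffGroup_le_comap hk
  rw [← QuotientGroup.eq_one_iff, ← QuotientGroup.mk'_apply, ← quadAltProd_quadMapHom, ← ht,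
    quadAltProd_centralParallelogramHom]

end CentralParallelograms

section FacePairs

variable {M : Type} [Group M]

def congrPairs (H K : Subgroup M) (hK : ∀ x ∈ H, ∀ k ∈ K, x * k * x⁻¹ ∈ K) :
    Subgroup (M × M) where
  carrier := {pq | pq.1 ∈ H ∧ pq.2 ∈ H ∧ pq.1 * pq.2⁻¹ ∈ K}
  one_mem' := ⟨one_mem _, one_mem _, by simp⟩
  mul_mem' := by
    rintro ⟨p, q⟩ ⟨p', q'⟩ ⟨hp, hq, hk⟩ ⟨hp', hq', hk'⟩
    refine ⟨mul_mem hp hp', mul_mem hq hq', ?_⟩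
    have h : p * p' * (q * q')⁻¹ = p * (p' * q'⁻¹) * p⁻¹ * (p * q⁻¹) := by group
    show p * p' * (q * q')⁻¹ ∈ K
    rw [h]
    exact mul_mem (hK p hp _ hk') hk
  inv_mem' := by
    rintro ⟨p, q⟩ ⟨hp, hq, hk⟩
    refine ⟨inv_mem hp, inv_mem hq, ?_⟩
    have h : p⁻¹ * q⁻¹⁻¹ = p⁻¹ * (p * q⁻¹)⁻¹ * p⁻¹⁻¹ := by group
    show p⁻¹ * q⁻¹⁻¹ ∈ K
    rw [h]
    exact hK _ (inv_mem hp) _ (inv_mem hk)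

@[simp]
lemma mem_congrPairs {H K : Subgroup M} {hK : ∀ x ∈ H, ∀ k ∈ K, x * k * x⁻¹ ∈ K}
    {pq : M × M} :
    pq ∈ congrPairs H K hK ↔ pq.1 ∈ H ∧ pq.2 ∈ H ∧ pq.1 * pq.2⁻¹ ∈ K :=
  Iff.rfl

end FacePairs

section OppositeFaces

variable {G : Type} [Group G]

variable (G) in
def facePairHom : Cube G →* Quad G × Quad G where
  toFun x := (face x 0 false, face x 0 true)
  map_one' := rfl
  map_mul' _ _ := rfl

variable (G) in
def joinQuadHom : Quad G × Quad G →* Cube G where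
  toFun pq := joinQuad pq.1 pq.2
  map_one' := Cube.ext_vec3 fun a b c => by cases a <;> cases b <;> cases c <;> rfl
  map_mul' _ _ := Cube.ext_vec3 fun a b c => by cases a <;> cases b <;> cases c <;> rfl

variable (G) in
noncomputable def oppositeFaceCongr : Subgroup (Quad G × Quad G) :=
  congrPairs (edgeGroup2 G) (faceDiffGroup G) fun _ hx _ hk => conj_mem_faceDiffGroup hx hk

lemma faceGroup_le_comap : faceGroup G ≤ (oppositeFaceCongr G).comap (facePairHom G) := by
  refine (Subgroup.closure_le _).2 ?_
  rintro _ ⟨g, _, ⟨i, b, rfl⟩, rfl⟩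
  fin_cases i <;> cases b <;>
    simp [oppositeFaceCongr, facePairHom, face, insert3, cubeElt, mem_edgeGroup2_diag,
      mem_edgeGroup2_1100, mem_edgeGroup2_1010, mem_edgeGroup2_0101, mem_edgeGroup2_0011,
      diag_mem_faceDiffGroup]

lemma joinQuad_self_mem_faceGroup {q : Quad G} (hq : q ∈ edgeGroup2 G) :
    joinQuad q q ∈ faceGroup G := by
  let f := (joinQuadHom G).comp ((MonoidHom.id _).prod (MonoidHom.id _))
  refine (Subgroup.closure_le ((faceGroup G).comap f)).2 ?_ hq
  rintro _ ⟨g, rfl | rfl | rfl⟩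
  · have h : f (g, g, 1, 1) = cubeElt {v | v 1 = false} g := Cube.ext_vec3 fun a b c => by
      cases a <;> cases b <;> cases c <;> simp [f, joinQuadHom, joinQuad, quadAt, cubeElt]
    exact Subgroup.mem_comap.2 (h ▸ cubeElt_mem_faceGroup ⟨1, false, rfl⟩ g)
  · have h : f (g, 1, g, 1) = cubeElt {v | v 2 = false} g := Cube.ext_vec3 fun a b c => by
      cases a <;> cases b <;> cases c <;> simp [f, joinQuadHom, joinQuad, quadAt, cubeElt]
    exact Subgroup.mem_comap.2 (h ▸ cubeElt_mem_faceGroup ⟨2, false, rfl⟩ g)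
  · have h : f (g, g, g, g) = cubeElt {v | v 0 = false} g * cubeElt {v | v 0 = true} g :=
      Cube.ext_vec3 fun a b c => by
        cases a <;> cases b <;> cases c <;> simp [f, joinQuadHom, joinQuad, quadAt, cubeElt]
    rw [SetLike.mem_coe, Subgroup.mem_comap, h]
    exact mul_mem (cubeElt_mem_faceGroup ⟨0, false, rfl⟩ g)
      (cubeElt_mem_faceGroup ⟨0, true, rfl⟩ g)

lemma joinQuad_one_mem_faceGroup {k : Quad G} (hk : k ∈ faceDiffGroup G) :
    joinQuad k 1 ∈ faceGroup G := by
  let f := (joinQuadHom G).comp (MonoidHom.inl _ _)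
  have hdiag (g : G) : f (g, g, g, g) = cubeElt {v | v 0 = false} g :=
    Cube.ext_vec3 fun a b c => by
      cases a <;> cases b <;> cases c <;> simp [f, joinQuadHom, joinQuad, quadAt, cubeElt]
  refine (sup_le ?_ (sup_le ?_ ?_) : faceDiffGroup G ≤ (faceGroup G).comap f) hk
  · rintro _ ⟨g, -, rfl⟩
    exact Subgroup.mem_comap.2 (hdiag g ▸ cubeElt_mem_faceGroup ⟨0, false, rfl⟩ g)
  · refine (Subgroup.closure_le _).2 ?_
    rintro _ ⟨u, hu, rfl | rfl | rfl⟩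
    · have h : f (u, u, 1, 1) = cubeElt {v | v 0 = false ∧ v 1 = false} u :=
        Cube.ext_vec3 fun a b c => by
          cases a <;> cases b <;> cases c <;> simp [f, joinQuadHom, joinQuad, quadAt, cubeElt]
      exact Subgroup.mem_comap.2 (h ▸ cubeElt_edge_mem_faceGroup 0 1 false false hu)
    · have h : f (u, 1, u, 1) = cubeElt {v | v 0 = false ∧ v 2 = false} u :=
        Cube.ext_vec3 fun a b c => by
          cases a <;> cases b <;> cases c <;> simp [f, joinQuadHom, joinQuad, quadAt, cubeElt]
      exact Subgroup.mem_comap.2 (h ▸ cubeElt_edge_mem_faceGroup 0 2 false false hu)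
    · exact Subgroup.mem_comap.2 (hdiag u ▸ cubeElt_mem_faceGroup ⟨0, false, rfl⟩ u)
  · rintro ⟨p, q, r, s⟩ hn
    obtain ⟨hp, hq, hr, hs⟩ := mem_quadSub.1 hn
    have h : f (p, q, r, s) = cubeElt {![false, false, false]} p *
        cubeElt {![false, false, true]} q * cubeElt {![false, true, false]} r *
        cubeElt {![false, true, true]} s := Cube.ext_vec3 fun a b c => by
      cases a <;> cases b <;> cases c <;> simp [f, joinQuadHom, joinQuad, quadAt, cubeElt]
    rw [Subgroup.mem_comap, h]
    exact mul_mem (mul_mem (mul_mem (cubeElt_singleton_mem_faceGroup _ hp)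
      (cubeElt_singleton_mem_faceGroup _ hq)) (cubeElt_singleton_mem_faceGroup _ hr))
      (cubeElt_singleton_mem_faceGroup _ hs)

lemma faceGroup_eq_comap : faceGroup G = (oppositeFaceCongr G).comap (facePairHom G) := by
  refine le_antisymm faceGroup_le_comap fun x hx => ?_
  obtain ⟨hp, hq, hk⟩ := hx
  have h : x = joinQuadHom G ((face x 0 false * (face x 0 true)⁻¹, 1) *
      (face x 0 true, face x 0 true)) := by
    simp [joinQuadHom, joinQuad_face]
  rw [h, map_mul]
  exact mul_mem (joinQuad_one_mem_faceGroup hk) (joinQuad_self_mem_faceGroup hq)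

end OppositeFaces

lemma cubeElt_singleton_mem_faceGroup_iff {G : Type} [Group G] (g : G) (η : Vtx) :
    cubeElt {η} g ∈ faceGroup G ↔ g ∈ secondCommutator G := by
  refine ⟨fun h => ?_, cubeElt_singleton_mem_faceGroup η⟩
  rw [faceGroup_eq_comap] at h
  have hk := quadAltProd_mem_secondCommutator h.2.2
  -- on the difference of the two faces of `g^{[3,{η}]}`, `quadAltProd` is `g` or `g⁻¹`
  obtain ⟨a, b, c, rfl⟩ := exists_eq_vec3 η
  cases a <;> cases b <;> cases c <;>
    simpa [facePairHom, quadAltProd, face, insert3, cubeElt, funext_iff, Fin.forall_fin_succ]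
      using hk

/-- (i) `G^{[3,2]} ⊇ G₂^{[3,1]} ⊇ G₃^{[3,3]}`; (ii) `g^{[3,{η}]} ∈ G^{[3,2]}`
iff `g ∈ G₃`; (iii) `K = G^{[2,2]}·G₂^{[2,1]}·G₃^{[2]}` is a normal subgroup of `G^{[2,1]}`
and `G^{[3,2]}` consists of the pairs of opposite faces `(g', g'') ∈ G^{[2,1]} × G^{[2,1]}`
with `g'·(g'')⁻¹ ∈ K`. -/
theorem faceGroup_description (G : Type) [Group G] :
    (edgeGroup3 (commutator G) ≤ faceGroup G ∧
      Subgroup.map (diagHom3 G) (secondCommutator G) ≤ edgeGroup3 (commutator G)) ∧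
    (∀ (g : G) (η : Vtx), cubeElt {η} g ∈ faceGroup G ↔ g ∈ secondCommutator G) ∧
    (∃ K : Subgroup (Quad G),
      (K : Set (Quad G)) =
        ((Subgroup.map (diagHom2 G) ⊤ : Subgroup (Quad G)) : Set (Quad G)) *
          (edgeGroup2Of (commutator G) : Set (Quad G)) *
          (quadSub (secondCommutator G) : Set (Quad G)) ∧
      K ≤ edgeGroup2 G ∧
      (∀ x ∈ edgeGroup2 G, ∀ k ∈ K, x * k * x⁻¹ ∈ K) ∧
      (faceGroup G : Set (Cube G)) =
        {x : Cube G | face x 0 false ∈ edgeGroup2 G ∧ face x 0 true ∈ edgeGroup2 G ∧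
          face x 0 false * (face x 0 true)⁻¹ ∈ (K : Set (Quad G))}) :=
  ⟨⟨edgeGroup3_commutator_le_faceGroup,
      (Subgroup.map_mono secondCommutator_le_commutator).trans (map_diagHom3_le_edgeGroup3 _)⟩,
    cubeElt_singleton_mem_faceGroup_iff,
    faceDiffGroup G, coe_faceDiffGroup, faceDiffGroup_le_edgeGroup2,
    fun _ hx _ hk => conj_mem_faceDiffGroup hx hk, by rw [faceGroup_eq_comap]; rfl⟩

end HK
end
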